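/- arXiv:2307.08643 — 3 statements merged into one kernel-verified Lean document; each statement's English description precedes it below -/
import Mathlib

section
/- Loss correction for (dependent) label corruption: let λ be a Markov kernel from X × Y to Y and let κ† be the Markov kernel from X × Y to X × Y sending (x̃, ỹ) to the product measure δ_{x̃} ×ₘ λ(x̃, ỹ). Let P̃ and P be probability measures on X × Y such that P = P̃ ∘ κ† (the bind of P̃ with κ†). Define the corrected loss ℓ̃ : 𝒫(Y) × X × Y → ℝ by ℓ̃(p, x̃, ỹ) := ∑_{y ∈ Y} λ(x̃, ỹ)({y}) · ℓ(p, y). Then for every hypothesis h, ∫_{X×Y} ℓ(h(x), y) dP(x, y) = ∫_{X×Y} ℓ̃(h(x̃), x̃, ỹ) dP̃(x̃, ỹ); consequently, for every hypothesis class H, inf_{h ∈ H} ∫ ℓ(h(x), y) dP = inf_{h ∈ H} ∫ ℓ̃(h(x̃), x̃, ỹ) dP̃, and a hypothesis h* ∈ H minimizes the clean risk over H if and only if it minimizes the corrected corrupted risk over H. -/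
/-!
Under `P = P̃ ∘ (δ_x̃ ⊗ λ)`, integrating a nonnegative function against `P` amounts to first
integrating out the clean label against `λ(x̃, ỹ)`, which for finite `Y` is the finite sum
defining the corrected loss. Hence the two risks agree hypothesis by hypothesis, and the
statements about infima and minimizers follow by rewriting.
-/

open MeasureTheory ProbabilityTheory

/-- A hypothesis: a measurable map from `X` to probability measures on `Y`
(equivalently, a Markov kernel from `X` to `Y`). -/
structure Hypothesis (X Y : Type*) [MeasurableSpace X] [MeasurableSpace Y] where
  toFun : X → Measure Y
  measurable' : Measurable toFun
  prob' : ∀ x, IsProbabilityMeasure (toFun x)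

open scoped ENNReal

namespace ProbabilityTheory.Kernel

variable {Ω X Y : Type*} [MeasurableSpace Ω] [MeasurableSpace X] [MeasurableSpace Y]

theorem lintegral_bind_dirac_prod {π : Ω → X} (hπ : Measurable π) (κ : Kernel Ω Y)
    [IsSFiniteKernel κ] (μ : Measure Ω) {f : X × Y → ℝ≥0∞} (hf : Measurable f) :
    ∫⁻ w, f w ∂μ.bind (fun ω => (Measure.dirac (π ω)).prod (κ ω)) =
      ∫⁻ ω, ∫⁻ y, f (π ω, y) ∂κ ω ∂μ := by
  have hkernel : (fun ω => (Measure.dirac (π ω)).prod (κ ω)) = ⇑(deterministic π hπ ×ₖ κ) := by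
    ext1 ω
    rw [prod_apply, deterministic_apply]
  rw [hkernel, Measure.lintegral_bind (Kernel.aemeasurable _) hf.aemeasurable]
  exact lintegral_congr fun ω => lintegral_deterministic_prod hπ κ ω hf

theorem integral_bind_dirac_prod_of_nonneg [Fintype Y] [MeasurableSingletonClass Y]
    {π : Ω → X} (hπ : Measurable π) (κ : Kernel Ω Y) [IsFiniteKernel κ] (μ : Measure Ω)
    {g : X × Y → ℝ} (hg : Measurable g) (hg_nonneg : 0 ≤ g) :
    ∫ w, g w ∂μ.bind (fun ω => (Measure.dirac (π ω)).prod (κ ω)) =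
      ∫ ω, ∑ y, (κ ω {y}).toReal * g (π ω, y) ∂μ := by
  have hsum_meas : Measurable fun ω => ∑ y, (κ ω {y}).toReal * g (π ω, y) :=
    Finset.measurable_sum _ fun y _ =>
      (κ.measurable_coe (measurableSet_singleton y)).ennreal_toReal.mul
        (hg.comp (hπ.prodMk measurable_const))
  have hterm_nonneg : ∀ ω y, 0 ≤ (κ ω {y}).toReal * g (π ω, y) := fun ω y =>
    mul_nonneg ENNReal.toReal_nonneg (hg_nonneg _)
  rw [integral_eq_lintegral_of_nonneg_ae (.of_forall hg_nonneg) hg.aestronglyMeasurable,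
    integral_eq_lintegral_of_nonneg_ae
      (.of_forall fun ω => Finset.sum_nonneg fun y _ => hterm_nonneg ω y)
      hsum_meas.aestronglyMeasurable,
    lintegral_bind_dirac_prod hπ κ μ hg.ennreal_ofReal]
  congr 1
  refine lintegral_congr fun ω => ?_
  rw [lintegral_fintype, ENNReal.ofReal_sum_of_nonneg fun y _ => hterm_nonneg ω y]
  refine Finset.sum_congr rfl fun y _ => ?_
  rw [ENNReal.ofReal_mul ENNReal.toReal_nonneg, ENNReal.ofReal_toReal (measure_ne_top _ _),
    mul_comm]

end ProbabilityTheory.Kernel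

theorem loss_correction_label_general {X Y : Type*} [MeasurableSpace X]
    [Fintype Y] [MeasurableSpace Y] [MeasurableSingletonClass Y]
    (loss : Measure Y → Y → ℝ)
    (hmeas : Measurable fun p : Measure Y × Y => loss p.1 p.2)
    (hnonneg : ∀ p y, 0 ≤ loss p y)
    (lam : Kernel (X × Y) Y) [IsMarkovKernel lam]
    (P Pt : Measure (X × Y))
    (hclean : P = Pt.bind fun p : X × Y => (Measure.dirac p.1).prod (lam p))
    (lossCorr : Measure Y → X × Y → ℝ)
    (hlossCorr : ∀ p z, lossCorr p z = ∑ y : Y, (lam z {y}).toReal * loss p y) :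
    (∀ h : Hypothesis X Y,
        ∫ z : X × Y, loss (h.toFun z.1) z.2 ∂P =
          ∫ z : X × Y, lossCorr (h.toFun z.1) z ∂Pt) ∧
      (∀ H : Set (Hypothesis X Y),
        (⨅ h ∈ H, ∫ z : X × Y, loss (h.toFun z.1) z.2 ∂P) =
          ⨅ h ∈ H, ∫ z : X × Y, lossCorr (h.toFun z.1) z ∂Pt) ∧
      ∀ (H : Set (Hypothesis X Y)) (hstar : Hypothesis X Y), hstar ∈ H →
        ((∀ h ∈ H, ∫ z : X × Y, loss (hstar.toFun z.1) z.2 ∂P ≤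
            ∫ z : X × Y, loss (h.toFun z.1) z.2 ∂P) ↔
          ∀ h ∈ H, ∫ z : X × Y, lossCorr (hstar.toFun z.1) z ∂Pt ≤
            ∫ z : X × Y, lossCorr (h.toFun z.1) z ∂Pt) := by
  have risk_eq : ∀ h : Hypothesis X Y,
      ∫ z, loss (h.toFun z.1) z.2 ∂P = ∫ z, lossCorr (h.toFun z.1) z ∂Pt := by
    intro h
    simp only [hclean, hlossCorr]
    exact Kernel.integral_bind_dirac_prod_of_nonneg measurable_fst lam Pt
      (hmeas.comp ((h.measurable'.comp measurable_fst).prodMk measurable_snd))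
      fun z => hnonneg _ _
  exact ⟨risk_eq, fun H => by simp only [risk_eq], fun H hstar _ => by simp only [risk_eq]⟩

/-- Loss correction for (dependent) label corruption: if the cleaning kernel is
`κ† = δ_X ⊗ λ` with `λ : X × Y ⇝ Y`, then the corrected loss
`ℓ̃(p, x̃, ỹ) := ∑_y λ(x̃, ỹ)({y}) ℓ(p, y)` preserves the risk of every hypothesis,
hence the constrained Bayes risks agree, and a hypothesis minimizes the clean risk
over a class `H` iff it minimizes the corrected corrupted risk over `H`. -/
theorem loss_correction_label {X Y : Type*} [MeasurableSpace X]
    [Fintype Y] [Nonempty Y] [MeasurableSpace Y] [MeasurableSingletonClass Y]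
    (loss : Measure Y → Y → ℝ)
    (hmeas : Measurable fun p : Measure Y × Y => loss p.1 p.2)
    (hnonneg : ∀ p y, 0 ≤ loss p y)
    (C : ℝ) (hbdd : ∀ p y, loss p y ≤ C)
    (lam : Kernel (X × Y) Y) [IsMarkovKernel lam]
    (P Pt : Measure (X × Y)) [IsProbabilityMeasure P] [IsProbabilityMeasure Pt]
    (hclean : P = Pt.bind fun p : X × Y => (Measure.dirac p.1).prod (lam p))
    (lossCorr : Measure Y → X × Y → ℝ)
    (hlossCorr : ∀ p z, lossCorr p z = ∑ y : Y, (lam z {y}).toReal * loss p y) :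
    (∀ h : Hypothesis X Y,
        ∫ z : X × Y, loss (h.toFun z.1) z.2 ∂P =
          ∫ z : X × Y, lossCorr (h.toFun z.1) z ∂Pt) ∧
      (∀ H : Set (Hypothesis X Y),
        (⨅ h ∈ H, ∫ z : X × Y, loss (h.toFun z.1) z.2 ∂P) =
          ⨅ h ∈ H, ∫ z : X × Y, lossCorr (h.toFun z.1) z ∂Pt) ∧
      ∀ (H : Set (Hypothesis X Y)) (hstar : Hypothesis X Y), hstar ∈ H →
        ((∀ h ∈ H, ∫ z : X × Y, loss (hstar.toFun z.1) z.2 ∂P ≤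
            ∫ z : X × Y, loss (h.toFun z.1) z.2 ∂P) ↔
          ∀ h ∈ H, ∫ z : X × Y, lossCorr (hstar.toFun z.1) z ∂Pt ≤
            ∫ z : X × Y, lossCorr (h.toFun z.1) z ∂Pt) :=
  loss_correction_label_general loss hmeas hnonneg lam P Pt hclean lossCorr hlossCorr
end

section
/- Loss correction under general joint corruption: let τ be a Markov kernel from X × Y to X and λ a Markov kernel from X × Y to Y, and let κ† be the Markov kernel from X × Y to X × Y sending (x̃, ỹ) to the product measure τ(x̃, ỹ) ×ₘ λ(x̃, ỹ). Let P̃ and P be probability measures on X × Y such that P = P̃ ∘ κ†. Then for every hypothesis h, ∫_{X×Y} ℓ(h(x), y) dP(x, y) = ∫_{X×Y} [ ∫_{𝒫(Y)} ( ∑_{y ∈ Y} λ(x̃, ỹ)({y}) · ℓ(u, y) ) d((τ(x̃, ỹ)).map h)(u) ] dP̃(x̃, ỹ), where (τ(x̃, ỹ)).map h denotes the pushforward of the measure τ(x̃, ỹ) on X under h (the measure τ # h on 𝒫(Y)); i.e. the corrected loss ℓ̃(h, x̃, ỹ) := E_{u ∼ (τ # h)(x̃, ỹ)}[ ∑_{y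 ∈ Y} λ(x̃, ỹ)({y}) · ℓ(u, y) ] preserves the risk of every hypothesis. -/
/-!
Since `P` is `P̃` pushed through the product kernel `τ ×ₖ λ`, the clean risk is an iterated
integral: first over `P̃`, then over `τ(x̃, ỹ) ×ₘ λ(x̃, ỹ)`. By Fubini and finiteness of `Y`, the
integral over `λ(x̃, ỹ)` is the weighted sum `∑ y, λ(x̃, ỹ){y} ℓ(h x, y)`, and the change of
variables `u = h x` turns the remaining integral over `τ(x̃, ỹ)` into one over `τ(x̃, ỹ) # h`.
-/

open MeasureTheory ProbabilityTheory

section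

variable {α β γ E : Type*} [MeasurableSpace α] [MeasurableSpace β] [MeasurableSpace γ]
  [NormedAddCommGroup E] [NormedSpace ℝ E]

theorem MeasureTheory.Measure.integral_comp {μ : Measure α} [SFinite μ]
    {κ : Kernel α β} [IsSFiniteKernel κ] {f : β → E} (hf : Integrable f (κ ∘ₘ μ)) :
    ∫ b, f b ∂(κ ∘ₘ μ) = ∫ a, ∫ b, f b ∂κ a ∂μ := by
  rw [Measure.comp_eq_comp_const_apply] at hf ⊢
  simpa using Kernel.integral_comp hf

theorem MeasureTheory.integral_prod_fintype_right [CompleteSpace E] [Fintype γ]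
    [MeasurableSingletonClass γ] {μ : Measure β} [SFinite μ] {ν : Measure γ} [IsFiniteMeasure ν]
    {f : β × γ → E} (hf : Integrable f (μ.prod ν)) :
    ∫ z, f z ∂μ.prod ν = ∫ x, ∑ y, ν.real {y} • f (x, y) ∂μ := by
  rw [integral_prod f hf]
  exact integral_congr_ae (hf.prod_right_ae.mono fun x hx => integral_fintype hx)

theorem integral_bind_prod_fintype [CompleteSpace E] [Fintype γ] [MeasurableSingletonClass γ]
    (μ : Measure α) [IsFiniteMeasure μ] (τ : Kernel α β) [IsFiniteKernel τ]
    (lam : Kernel α γ) [IsFiniteKernel lam] {f : β × γ → E} (hf : StronglyMeasurable f)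
    (C : ℝ) (hC : ∀ z, ‖f z‖ ≤ C) :
    ∫ z, f z ∂μ.bind (fun a => (τ a).prod (lam a)) =
      ∫ a, ∫ x, ∑ y, (lam a).real {y} • f (x, y) ∂τ a ∂μ := by
  have hprod : (fun a => (τ a).prod (lam a)) = ⇑(τ ×ₖ lam) :=
    funext fun a => (Kernel.prod_apply τ lam a).symm
  have hint (ν : Measure (β × γ)) [IsFiniteMeasure ν] : Integrable f ν :=
    Integrable.of_bound hf.aestronglyMeasurable C (ae_of_all _ hC)
  rw [hprod, Measure.integral_comp (hint _)]
  refine integral_congr_ae (ae_of_all _ fun a => ?_)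
  dsimp only
  rw [Kernel.prod_apply, integral_prod_fintype_right (hint _)]

end

theorem loss_correction_joint_general {X Y : Type*} [MeasurableSpace X]
    [Fintype Y] [MeasurableSpace Y] [MeasurableSingletonClass Y]
    (loss : Measure Y → Y → ℝ)
    (hmeas : Measurable fun p : Measure Y × Y => loss p.1 p.2)
    (hnonneg : ∀ p y, 0 ≤ loss p y)
    (C : ℝ) (hbdd : ∀ p y, loss p y ≤ C)
    (τ : Kernel (X × Y) X) [IsMarkovKernel τ]
    (lam : Kernel (X × Y) Y) [IsMarkovKernel lam]
    (P Pt : Measure (X × Y)) [IsProbabilityMeasure Pt]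
    (hclean : P = Pt.bind fun p : X × Y => (τ p).prod (lam p)) :
    ∀ h : Hypothesis X Y,
      ∫ z : X × Y, loss (h.toFun z.1) z.2 ∂P =
        ∫ z : X × Y,
          (∫ u, ∑ y : Y, (lam z {y}).toReal * loss u y ∂((τ z).map h.toFun)) ∂Pt := by
  intro h
  have hloss_h : Measurable fun z : X × Y => loss (h.toFun z.1) z.2 :=
    hmeas.comp ((h.measurable'.comp measurable_fst).prodMk measurable_snd)
  have hcorrected (c : Y → ℝ) : Measurable fun u => ∑ y, c y * loss u y :=
    Finset.measurable_sum _ fun y _ =>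
      measurable_const.mul (hmeas.comp (measurable_id.prodMk measurable_const))
  rw [hclean, integral_bind_prod_fintype Pt τ lam hloss_h.stronglyMeasurable C fun z =>
    (Real.norm_of_nonneg (hnonneg _ _)).trans_le (hbdd _ _)]
  refine integral_congr_ae (ae_of_all _ fun z => ?_)
  dsimp only
  rw [integral_map h.measurable'.aemeasurable (hcorrected _).aestronglyMeasurable]
  simp only [smul_eq_mul, measureReal_def]

/-- Loss correction under general joint corruption: if the cleaning kernel is
`κ† = τ ⊗ λ` with `τ : X × Y ⇝ X` and `λ : X × Y ⇝ Y`, then the corrected loss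
`ℓ̃(h, x̃, ỹ) := E_{u ∼ (τ # h)(x̃, ỹ)}[ ∑_y λ(x̃, ỹ)({y}) ℓ(u, y) ]`
preserves the risk of every hypothesis. -/
theorem loss_correction_joint {X Y : Type*} [MeasurableSpace X]
    [Fintype Y] [Nonempty Y] [MeasurableSpace Y] [MeasurableSingletonClass Y]
    (loss : Measure Y → Y → ℝ)
    (hmeas : Measurable fun p : Measure Y × Y => loss p.1 p.2)
    (hnonneg : ∀ p y, 0 ≤ loss p y)
    (C : ℝ) (hbdd : ∀ p y, loss p y ≤ C)
    (τ : Kernel (X × Y) X) [IsMarkovKernel τ]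
    (lam : Kernel (X × Y) Y) [IsMarkovKernel lam]
    (P Pt : Measure (X × Y)) [IsProbabilityMeasure P] [IsProbabilityMeasure Pt]
    (hclean : P = Pt.bind fun p : X × Y => (τ p).prod (lam p)) :
    ∀ h : Hypothesis X Y,
      ∫ z : X × Y, loss (h.toFun z.1) z.2 ∂P =
        ∫ z : X × Y,
          (∫ u, ∑ y : Y, (lam z {y}).toReal * loss u y ∂((τ z).map h.toFun)) ∂Pt :=
  loss_correction_joint_general loss hmeas hnonneg C hbdd τ lam P Pt hclean
end

section
/- Bayes risk under label corruption (Lemma on Y-corruption): let π be a probability measure on the measurable space X, F a Markov kernel from X to the finite label space Y (the posterior), and let P be the probability measure on X × Y determined by P(A × {y}) = ∫_A F(x)({y}) dπ(x). Let λ be a Markov kernel from X × Y to Y and let κ be the Markov kernel from X × Y to X × Y sending (x, y) to the product measure δ_x ×ₘ λ(x, y). Then: (i) P ∘ κ is the probability measure determined by (P ∘ κ)(A × {ỹ}) = ∫_A F'(x)({ỹ}) dπ(x), where F'(x) := ∑_{y ∈ Y} F(x)({y}) • λ(x, y) (the partial chain composition F ∘_Y λ), so in particular the X-marginal of P ∘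 κ is still π; and (ii) for every hypothesis h, ∫_{X×Y} ℓ(h(x̃), ỹ) d(P ∘ κ)(x̃, ỹ) = ∫_{X×Y} [ ∑_{ỹ ∈ Y} λ(x, y)({ỹ}) · ℓ(h(x), ỹ) ] dP(x, y), hence for every hypothesis class H the corresponding constrained Bayes risks are equal; in particular label corruption modifies only the loss function and leaves the hypothesis class untouched. -/
open MeasureTheory ProbabilityTheory

/-!
Since `Y` is finite, a measure on `X × Y` is determined by its values on the sets `A ×ˢ {y}`, so
the hypothesis on `P` says `P = π ⊗ₘ F`. The corruption kernel keeps the first coordinate, hence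
integrating against `P ∘ κ` is integrating over `P` the `λ(x, y)`-average of the integrand at
`(x, ·)`. For the indicator of `A ×ˢ {ỹ}` this is (i); for `ℓ(h(x), ·)` it is (ii), in which the
hypothesis `h` enters only through `h(x)`.
-/

open scoped ENNReal

namespace MeasureTheory.Measure

variable {α β γ : Type*} [MeasurableSpace α] [MeasurableSpace β] [MeasurableSpace γ]

/-- Unlike `Measure.ext_prod`, no finiteness is needed: a measurable set is the countable disjoint
union of its slices `Sᵇ ×ˢ {b}`. -/
lemma ext_of_prod_singleton [Countable β] [MeasurableSingletonClass β] {μ ν : Measure (α × β)}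
    (h : ∀ s, MeasurableSet s → ∀ b, μ (s ×ˢ {b}) = ν (s ×ˢ {b})) : μ = ν := by
  ext S hS
  set slice : β → Set (α × β) := fun b => ((fun a => (a, b)) ⁻¹' S) ×ˢ {b}
  have hS_eq : S = ⋃ b, slice b := by ext ⟨a, b⟩; simp [slice]
  have hdisj : Pairwise (Function.onFun Disjoint slice) := fun b b' hbb' => by
    simp [Function.onFun, slice, Set.disjoint_prod, hbb']
  have hmeas : ∀ b, MeasurableSet (slice b) := fun b =>
    (measurable_prodMk_right hS).prod (measurableSet_singleton b)
  rw [hS_eq, measure_iUnion hdisj hmeas, measure_iUnion hdisj hmeas]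
  exact tsum_congr fun b => h _ (measurable_prodMk_right hS) b

lemma lintegral_apply_eq_sum_smul_apply [Fintype β] [MeasurableSingletonClass β] (μ : Measure β)
    (ν : β → Measure γ) (s : Set γ) : ∫⁻ b, ν b s ∂μ = (∑ b, μ {b} • ν b) s := by
  simp [lintegral_fintype, mul_comm]

section DiracProd

variable {f : α → β} (κ : Kernel α γ) [IsSFiniteKernel κ]

lemma measurable_dirac_prod (hf : Measurable f) :
    Measurable fun a => (dirac (f a)).prod (κ a) := by
  have h : ⇑(Kernel.deterministic f hf ×ₖ κ) = fun a => (dirac (f a)).prod (κ a) := by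
    ext1 a; rw [Kernel.prod_apply, Kernel.deterministic_apply]
  exact h ▸ (Kernel.deterministic f hf ×ₖ κ).measurable

lemma bind_dirac_prod_apply_prod (hf : Measurable f) (P : Measure α) {s : Set β}
    (hs : MeasurableSet s) {t : Set γ} (ht : MeasurableSet t) :
    (P.bind fun a => (dirac (f a)).prod (κ a)) (s ×ˢ t) = ∫⁻ a in f ⁻¹' s, κ a t ∂P := by
  rw [bind_apply (hs.prod ht) (measurable_dirac_prod κ hf).aemeasurable,
    ← lintegral_indicator (hf hs)]
  refine lintegral_congr fun a => ?_
  rw [prod_prod, dirac_apply' _ hs]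
  by_cases ha : f a ∈ s <;> simp [ha]

lemma lintegral_bind_dirac_prod (hf : Measurable f) (P : Measure α) {g : β × γ → ℝ≥0∞}
    (hg : Measurable g) :
    ∫⁻ z, g z ∂(P.bind fun a => (dirac (f a)).prod (κ a)) = ∫⁻ a, ∫⁻ c, g (f a, c) ∂κ a ∂P := by
  rw [lintegral_bind (measurable_dirac_prod κ hf).aemeasurable hg.aemeasurable]
  refine lintegral_congr fun a => ?_
  rw [dirac_prod, lintegral_map hg measurable_prodMk_left]

end DiracProd

lemma compProd_bind_dirac_prod_apply_prod (π : Measure α) [SFinite π] (F : Kernel α β)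
    [IsSFiniteKernel F] (η : Kernel (α × β) γ) [IsSFiniteKernel η] {s : Set α}
    (hs : MeasurableSet s) {t : Set γ} (ht : MeasurableSet t) :
    ((π ⊗ₘ F).bind fun p => (dirac p.1).prod (η p)) (s ×ˢ t) =
      ∫⁻ a in s, ∫⁻ b, η (a, b) t ∂F a ∂π := by
  rw [bind_dirac_prod_apply_prod η measurable_fst _ hs ht, ← Set.prod_univ,
    setLIntegral_compProd (η.measurable_coe ht) hs .univ]
  simp only [restrict_univ]

lemma integral_bind_dirac_prod [Fintype γ] [MeasurableSingletonClass γ] (P : Measure α)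
    {f : α → β} (hf : Measurable f) (κ : Kernel α γ) [IsFiniteKernel κ] {g : β × γ → ℝ}
    (hg : Measurable g) (hg_nonneg : 0 ≤ g) :
    ∫ z, g z ∂(P.bind fun a => (dirac (f a)).prod (κ a)) =
      ∫ a, ∑ c, (κ a {c}).toReal * g (f a, c) ∂P := by
  have hsum_nonneg : ∀ a, 0 ≤ ∑ c, (κ a {c}).toReal * g (f a, c) := fun a =>
    Finset.sum_nonneg fun c _ => mul_nonneg ENNReal.toReal_nonneg (hg_nonneg _)
  have hsum_meas : Measurable fun a => ∑ c, (κ a {c}).toReal * g (f a, c) :=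
    Finset.measurable_sum _ fun c _ =>
      (κ.measurable_coe (measurableSet_singleton c)).ennreal_toReal.mul
        (hg.comp (hf.prodMk measurable_const))
  rw [integral_eq_lintegral_of_nonneg_ae (.of_forall hg_nonneg) hg.aestronglyMeasurable,
    integral_eq_lintegral_of_nonneg_ae (.of_forall hsum_nonneg) hsum_meas.aestronglyMeasurable,
    lintegral_bind_dirac_prod κ hf P hg.ennreal_ofReal]
  congr 1
  refine lintegral_congr fun a => ?_
  rw [lintegral_fintype, ENNReal.ofReal_sum_of_nonneg fun c _ =>
    mul_nonneg ENNReal.toReal_nonneg (hg_nonneg _)]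
  refine Finset.sum_congr rfl fun c _ => ?_
  rw [ENNReal.ofReal_mul ENNReal.toReal_nonneg, ENNReal.ofReal_toReal (measure_ne_top _ _),
    mul_comm]

end MeasureTheory.Measure

theorem br_label_corruption_general
    {X Y : Type*} [MeasurableSpace X]
    [Fintype Y] [MeasurableSpace Y] [MeasurableSingletonClass Y]
    (loss : Measure Y → Y → ℝ)
    (hmeas : Measurable fun p : Measure Y × Y => loss p.1 p.2)
    (hnonneg : ∀ p y, 0 ≤ loss p y)
    (π : Measure X) [IsProbabilityMeasure π]
    (F : Kernel X Y) [IsMarkovKernel F]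
    (P : Measure (X × Y))
    (hP : ∀ (A : Set X), MeasurableSet A → ∀ y : Y,
      P (A ×ˢ {y}) = ∫⁻ x in A, F x {y} ∂π)
    (lam : Kernel (X × Y) Y) [IsMarkovKernel lam] :
    ((∀ (A : Set X), MeasurableSet A → ∀ yt : Y,
        (P.bind fun p : X × Y => (Measure.dirac p.1).prod (lam p)) (A ×ˢ {yt}) =
          ∫⁻ x in A, (∑ y : Y, F x {y} • lam (x, y)) {yt} ∂π) ∧
      (P.bind fun p : X × Y => (Measure.dirac p.1).prod (lam p)).map Prod.fst = π) ∧
    (∀ h : Hypothesis X Y,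
      ∫ z, loss (h.toFun z.1) z.2
          ∂(P.bind fun p : X × Y => (Measure.dirac p.1).prod (lam p)) =
        ∫ z : X × Y, ∑ yt : Y, (lam z {yt}).toReal * loss (h.toFun z.1) yt ∂P) ∧
    ∀ H : Set (Hypothesis X Y),
      (⨅ h ∈ H, ∫ z, loss (h.toFun z.1) z.2
          ∂(P.bind fun p : X × Y => (Measure.dirac p.1).prod (lam p))) =
        ⨅ h ∈ H, ∫ z : X × Y, ∑ yt : Y, (lam z {yt}).toReal * loss (h.toFun z.1) yt ∂P := by
  obtain rfl : P = π ⊗ₘ F := Measure.ext_of_prod_singleton fun A hA y => by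
    rw [hP A hA y, Measure.compProd_apply_prod hA (measurableSet_singleton y)]
  have hrisk := fun h : Hypothesis X Y =>
    Measure.integral_bind_dirac_prod (π ⊗ₘ F) measurable_fst lam
      (hmeas.comp ((h.measurable'.comp measurable_fst).prodMk measurable_snd)) fun _ => hnonneg _ _
  refine ⟨⟨fun A hA yt => ?_, ?_⟩, hrisk,
    fun H => iInf_congr fun h => iInf_congr fun _ => hrisk h⟩
  · simp_rw [Measure.compProd_bind_dirac_prod_apply_prod π F lam hA (measurableSet_singleton yt),
      Measure.lintegral_apply_eq_sum_smul_apply]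
  · ext A hA
    rw [Measure.map_apply measurable_fst hA, ← Set.prod_univ,
      Measure.compProd_bind_dirac_prod_apply_prod π F lam hA .univ]
    simp

/-- Bayes risk under label corruption: for `P = π_X × F` and the corruption
`κ = δ_X ⊗ λ` with `λ : X × Y ⇝ Y`, (i) `P ∘ κ = π_X × (F ∘_Y λ)` where
`F'(x) = ∑_y F(x)({y}) • λ(x, y)` (so the `X`-marginal is still `π`), and
(ii) the risk of every hypothesis on `P ∘ κ` equals the risk of the `λ`-corrected
loss on `P`, hence the constrained Bayes risks agree: label corruption modifies only
the loss function and leaves the hypothesis class untouched. -/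
theorem br_label_corruption
    {X Y : Type*} [MeasurableSpace X]
    [Fintype Y] [Nonempty Y] [MeasurableSpace Y] [MeasurableSingletonClass Y]
    (loss : Measure Y → Y → ℝ)
    (hmeas : Measurable fun p : Measure Y × Y => loss p.1 p.2)
    (hnonneg : ∀ p y, 0 ≤ loss p y)
    (C : ℝ) (hbdd : ∀ p y, loss p y ≤ C)
    (π : Measure X) [IsProbabilityMeasure π]
    (F : Kernel X Y) [IsMarkovKernel F]
    (P : Measure (X × Y)) [IsProbabilityMeasure P]
    (hP : ∀ (A : Set X), MeasurableSet A → ∀ y : Y,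
      P (A ×ˢ {y}) = ∫⁻ x in A, F x {y} ∂π)
    (lam : Kernel (X × Y) Y) [IsMarkovKernel lam] :
    ((∀ (A : Set X), MeasurableSet A → ∀ yt : Y,
        (P.bind fun p : X × Y => (Measure.dirac p.1).prod (lam p)) (A ×ˢ {yt}) =
          ∫⁻ x in A, (∑ y : Y, F x {y} • lam (x, y)) {yt} ∂π) ∧
      (P.bind fun p : X × Y => (Measure.dirac p.1).prod (lam p)).map Prod.fst = π) ∧
    (∀ h : Hypothesis X Y,
      ∫ z, loss (h.toFun z.1) z.2
          ∂(P.bind fun p : X × Y => (Measure.dirac p.1).prod (lam p)) =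
        ∫ z : X × Y, ∑ yt : Y, (lam z {yt}).toReal * loss (h.toFun z.1) yt ∂P) ∧
    ∀ H : Set (Hypothesis X Y),
      (⨅ h ∈ H, ∫ z, loss (h.toFun z.1) z.2
          ∂(P.bind fun p : X × Y => (Measure.dirac p.1).prod (lam p))) =
        ⨅ h ∈ H, ∫ z : X × Y, ∑ yt : Y, (lam z {yt}).toReal * loss (h.toFun z.1) yt ∂P :=
  br_label_corruption_general loss hmeas hnonneg π F P hP lam
end
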